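/- arXiv:math/0405257 — 2 statements merged into one kernel-verified Lean document; each statement's English description precedes it below -/
import Mathlib

section
/- Let V be an n-dimensional real vector space, L ⊆ V ⊕ V* maximal isotropic with respect to the canonical pairing, and W ⊆ V a subspace. Let W° = {α ∈ V* : α|_W = 0} be the annihilator. Then the quotient (L ∩ (W ⊕ V*)) / (L ∩ ({0} ⊕ W°)) maps injectively into W ⊕ W* via (X, α) ↦ (X, α|_W), and its image is an isotropic subspace of W ⊕ W* with respect to the canonical pairing on W ⊕ W*. -/
open Module

noncomputable section

variable {V : Type*} [AddCommGroup V] [Module ℝ V] [FiniteDimensional ℝ V]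

/-- The canonical pairing on `V ⊕ V*`. -/
def pairing {W : Type*} [AddCommGroup W] [Module ℝ W]
    (p q : W × Module.Dual ℝ W) : ℝ := (1/2) * (p.2 q.1 + q.2 p.1)

/-- A subspace of `V ⊕ V*` is isotropic if the canonical pairing vanishes on it. -/
def IsIsotropic {W : Type*} [AddCommGroup W] [Module ℝ W]
    (L : Submodule ℝ (W × Module.Dual ℝ W)) : Prop :=
  ∀ p ∈ L, ∀ q ∈ L, pairing p q = 0

def auxF (L : Submodule ℝ (V × Module.Dual ℝ V)) (W : Submodule ℝ V) :
    ↥(L ⊓ Submodule.prod W (⊤ : Submodule ℝ (Module.Dual ℝ V))) →ₗ[ℝ]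
      ↥W × Module.Dual ℝ ↥W where
  toFun p := (⟨(p : V × Module.Dual ℝ V).1, p.2.2.1⟩,
    (p : V × Module.Dual ℝ V).2.comp W.subtype)
  map_add' p q := by ext <;> simp
  map_smul' c p := by ext <;> simp

theorem stmt8 (L : Submodule ℝ (V × Module.Dual ℝ V))
    (hL : IsIsotropic L) (hdim : finrank ℝ L = finrank ℝ V) (W : Submodule ℝ V) :
    ∃ f : ↥(L ⊓ Submodule.prod W (⊤ : Submodule ℝ (Module.Dual ℝ V))) →ₗ[ℝ]
        ↥W × Module.Dual ℝ ↥W,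
      (∀ p, ((f p).1 : V) = (p : V × Module.Dual ℝ V).1 ∧
        ∀ w : W, (f p).2 w = (p : V × Module.Dual ℝ V).2 w) ∧
      (∀ p, f p = 0 ↔ ((p : V × Module.Dual ℝ V).1 = 0 ∧
        ∀ w ∈ W, (p : V × Module.Dual ℝ V).2 w = 0)) ∧
      IsIsotropic (LinearMap.range f) := by

  classical
  refine ⟨auxF L W, ?_, ?_, ?_⟩
  · intro p
    exact ⟨rfl, fun w => rfl⟩
  · intro p
    have hc : (auxF L W) p = (⟨(p : V × Module.Dual ℝ V).1, p.2.2.1⟩,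
        (p : V × Module.Dual ℝ V).2.comp W.subtype) := rfl
    rw [hc, Prod.ext_iff]
    constructor
    · rintro ⟨h1, h2⟩
      refine ⟨by simpa [Subtype.ext_iff] using h1, fun w hw => ?_⟩
      have := LinearMap.congr_fun h2 ⟨w, hw⟩
      simpa using this
    · rintro ⟨h1, h2⟩
      exact ⟨Subtype.ext (by simpa using h1),
        LinearMap.ext fun w => by simpa using h2 w w.2⟩
  · rintro a ⟨p, rfl⟩ b ⟨q, rfl⟩
    have := hL _ p.2.1 _ q.2.1
    simpa [pairing, auxF] using this
end
end

section
/- Let V be an n-dimensional real vector space, L ⊆ V ⊕ V* maximal isotropic, and W ⊆ V a subspace of dimension k. Then the image L_W of L ∩ (W ⊕ V*) in W ⊕ W* (via (X,α) ↦ (X, α|_W)) is a maximal isotropic subspace of W ⊕ W*, i.e., dim L_W = k. -/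
/-!
Put `M = L ∩ (W ⊕ V*)` and `S = 0 ⊕ W°`. The map `(X, α) ↦ (X, α|_W)` sends `M` onto `L_W` with
kernel `L ∩ S`, so `dim L_W = dim M - dim (L ∩ S)`. Since `L = L^⊥` and `S^⊥ = W ⊕ V*`, we get
`M^⊥ = L + S`, hence `2n - dim M = dim (L + S) = n + (n - k) - dim (L ∩ S)`, i.e.
`dim M = k + dim (L ∩ S)` and `dim L_W = k`.
-/

open Module

noncomputable section

variable {V : Type*} [AddCommGroup V] [Module ℝ V] [FiniteDimensional ℝ V]

section

variable {K E F : Type*} [DivisionRing K] [AddCommGroup E] [Module K E]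
  [AddCommGroup F] [Module K F]

theorem Submodule.finrank_map_add_finrank_inf_ker (f : E →ₗ[K] F) (N : Submodule K E)
    [FiniteDimensional K N] :
    finrank K (N.map f) + finrank K ↥(N ⊓ LinearMap.ker f) = finrank K N := by
  rw [← LinearMap.range_domRestrict, ← LinearMap.finrank_range_add_finrank_ker (f.domRestrict N),
    LinearMap.ker_domRestrict, ← Submodule.finrank_map_subtype_eq N, Submodule.map_comap_subtype]

theorem Submodule.finrank_comap_of_injective {f : E →ₗ[K] F} (hf : Function.Injective f)
    {P : Submodule K F} (hP : P ≤ LinearMap.range f) : finrank K (P.comap f) = finrank K P := by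
  conv_rhs => rw [← Submodule.map_comap_eq_self hP]
  exact (Submodule.equivMapOfInjective f hf _).finrank_eq

theorem Submodule.finrank_bot_prod (N : Submodule K F) :
    finrank K ↥((⊥ : Submodule K E).prod N) = finrank K N := by
  rw [← Submodule.map_inr]
  exact (Submodule.equivMapOfInjective _ LinearMap.inr_injective _).finrank_eq.symm

end

theorem LinearMap.BilinForm.orthogonal_sup {R M : Type*} [CommRing R] [AddCommGroup M]
    [Module R M] (B : LinearMap.BilinForm R M) (N N' : Submodule R M) :
    B.orthogonal (N ⊔ N') = B.orthogonal N ⊓ B.orthogonal N' := by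
  ext m
  simp only [Submodule.mem_inf, LinearMap.BilinForm.mem_orthogonal_iff]
  refine ⟨fun h => ⟨fun n hn => h n (Submodule.mem_sup_left hn),
    fun n hn => h n (Submodule.mem_sup_right hn)⟩, ?_⟩
  rintro ⟨h, h'⟩ _ hnn'
  obtain ⟨n, hn, n', hn', rfl⟩ := Submodule.mem_sup.mp hnn'
  rw [map_add, LinearMap.add_apply, h n hn, h' n' hn', add_zero]

section Pairing

variable (U : Type*) [AddCommGroup U] [Module ℝ U]

def pairingForm : LinearMap.BilinForm ℝ (U × Dual ℝ U) :=
  LinearMap.mk₂ ℝ pairing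
    (fun _ _ _ => by simp [pairing]; ring) (fun _ _ _ => by simp [pairing]; ring)
    (fun _ _ _ => by simp [pairing]; ring) (fun _ _ _ => by simp [pairing]; ring)

variable {U}

theorem pairingForm_apply (p q : U × Dual ℝ U) : pairingForm U p q = pairing p q := rfl

theorem pairingForm_isSymm : (pairingForm U).IsSymm :=
  LinearMap.BilinForm.isSymm_def.mpr fun p q => by
    simp only [pairingForm_apply, pairing]
    ring

theorem pairingForm_nondegenerate : (pairingForm U).Nondegenerate := by
  refine (LinearMap.IsRefl.nondegenerate_iff_separatingLeft
    (pairingForm_isSymm (U := U)).isRefl).mpr fun p hp => ?_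
  refine Prod.ext ?_ ?_
  · refine (Module.forall_dual_apply_eq_zero_iff ℝ p.1).mp fun φ => ?_
    simpa [pairingForm_apply, pairing] using hp (0, φ)
  · ext x
    simpa [pairingForm_apply, pairing] using hp (x, 0)

theorem isIsotropic_iff_le_orthogonal (L : Submodule ℝ (U × Dual ℝ U)) :
    IsIsotropic L ↔ L ≤ (pairingForm U).orthogonal L :=
  ⟨fun hL p hp q hq => hL q hq p hp, fun hL p hp _ hq => hL hq p hp⟩

theorem orthogonal_bot_prod_dualAnnihilator (W : Submodule ℝ U) :
    (pairingForm U).orthogonal ((⊥ : Submodule ℝ U).prod W.dualAnnihilator) = W.prod ⊤ := by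
  ext p
  simp only [LinearMap.BilinForm.mem_orthogonal_iff, pairingForm_apply, pairing,
    Submodule.mem_prod, Submodule.mem_bot, Submodule.mem_top, and_true, Prod.forall]
  constructor
  · intro h
    rw [← Subspace.dualAnnihilator_dualCoannihilator_eq (W := W), Submodule.mem_dualCoannihilator]
    intro β hβ
    simpa using h 0 β ⟨rfl, hβ⟩
  · rintro hp _ β ⟨rfl, hβ⟩
    simp [(Submodule.mem_dualAnnihilator β).mp hβ p.1 hp]

/-- The subspace `L_W`: backward image of `L` under the inclusion `W → V`. -/
def pullback (W : Submodule ℝ U) (L : Submodule ℝ (U × Dual ℝ U)) :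
    Submodule ℝ (W × Dual ℝ W) :=
  (L.comap (W.subtype.prodMap LinearMap.id)).map (LinearMap.id.prodMap W.subtype.dualMap)

theorem coe_pullback (W : Submodule ℝ U) (L : Submodule ℝ (U × Dual ℝ U)) :
    (pullback W L : Set (W × Dual ℝ W)) = {q : W × Dual ℝ W |
      ∃ (X : U) (α : Dual ℝ U), (X, α) ∈ L ∧ X = (q.1 : U) ∧ ∀ w : W, α w = q.2 w} := by
  ext q
  simp only [SetLike.mem_coe, pullback, Submodule.mem_map, Submodule.mem_comap]
  constructor
  · rintro ⟨⟨w, α⟩, hwα, rfl⟩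
    exact ⟨w, α, hwα, rfl, fun _ => rfl⟩
  · rintro ⟨X, α, hXα, rfl, hα⟩
    exact ⟨(q.1, α), hXα, Prod.ext rfl (LinearMap.ext hα)⟩

end Pairing

theorem finrank_prod_dual : finrank ℝ (V × Dual ℝ V) = finrank ℝ V + finrank ℝ V := by
  rw [Module.finrank_prod, Subspace.dual_finrank_eq]

theorem orthogonal_eq_self_of_isIsotropic {L : Submodule ℝ (V × Dual ℝ V)} (hL : IsIsotropic L)
    (hdim : finrank ℝ L = finrank ℝ V) : (pairingForm V).orthogonal L = L := by
  refine (Submodule.eq_of_le_of_finrank_le ((isIsotropic_iff_le_orthogonal L).mp hL) ?_).symm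
  rw [LinearMap.BilinForm.finrank_orthogonal pairingForm_nondegenerate, finrank_prod_dual, hdim]
  omega

theorem finrank_inf_prod_top {L : Submodule ℝ (V × Dual ℝ V)} (hL : IsIsotropic L)
    (hdim : finrank ℝ L = finrank ℝ V) (W : Submodule ℝ V) :
    finrank ℝ ↥(L ⊓ W.prod ⊤) =
      finrank ℝ W + finrank ℝ ↥(L ⊓ (⊥ : Submodule ℝ V).prod W.dualAnnihilator) := by
  set S := (⊥ : Submodule ℝ V).prod W.dualAnnihilator
  have horth : (pairingForm V).orthogonal (L ⊓ W.prod ⊤) = L ⊔ S := by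
    rw [← orthogonal_eq_self_of_isIsotropic hL hdim, ← orthogonal_bot_prod_dualAnnihilator,
      ← LinearMap.BilinForm.orthogonal_sup, LinearMap.BilinForm.orthogonal_orthogonal
        pairingForm_nondegenerate pairingForm_isSymm.isRefl,
      orthogonal_eq_self_of_isIsotropic hL hdim]
  have hS : finrank ℝ S = finrank ℝ W.dualAnnihilator := Submodule.finrank_bot_prod _
  have hsup := Submodule.finrank_sup_add_finrank_inf_eq L S
  have hM := LinearMap.BilinForm.finrank_orthogonal pairingForm_nondegenerate (L ⊓ W.prod ⊤)
  have hMle := Submodule.finrank_le (L ⊓ W.prod ⊤)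
  have hW := Subspace.finrank_add_finrank_dualAnnihilator_eq W
  rw [horth, finrank_prod_dual] at hM
  rw [finrank_prod_dual] at hMle
  omega

theorem finrank_pullback_add (W : Submodule ℝ V) (L : Submodule ℝ (V × Dual ℝ V)) :
    finrank ℝ (pullback W L) + finrank ℝ ↥(L ⊓ (⊥ : Submodule ℝ V).prod W.dualAnnihilator) =
      finrank ℝ ↥(L ⊓ W.prod ⊤) := by
  set ι := W.subtype.prodMap (LinearMap.id : Dual ℝ V →ₗ[ℝ] Dual ℝ V)
  set φ := (LinearMap.id : W →ₗ[ℝ] W).prodMap W.subtype.dualMap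
  have hι : Function.Injective ι :=
    Prod.map_injective.mpr ⟨W.subtype_injective, Function.injective_id⟩
  have hrange : LinearMap.range ι = W.prod ⊤ := by
    rw [LinearMap.range_prodMap, Submodule.range_subtype, LinearMap.range_id]
  have hker : LinearMap.ker φ = ((⊥ : Submodule ℝ V).prod W.dualAnnihilator).comap ι := by
    ext ⟨w, α⟩
    simp [ι, φ, Submodule.mem_dualAnnihilator, LinearMap.ext_iff]
  rw [← Submodule.finrank_comap_of_injective hι (inf_le_right.trans hrange.ge),
    ← Submodule.finrank_comap_of_injective hι
      (inf_le_right.trans ((Submodule.prod_mono bot_le le_top).trans hrange.ge)),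
    Submodule.comap_inf, Submodule.comap_inf, ← hker, ← hrange,
    LinearMap.range_le_iff_comap.mp le_rfl, inf_top_eq]
  exact Submodule.finrank_map_add_finrank_inf_ker φ _

theorem stmt9 (L : Submodule ℝ (V × Module.Dual ℝ V))
    (hL : IsIsotropic L) (hdim : finrank ℝ L = finrank ℝ V) (W : Submodule ℝ V) :
    ∃ LW : Submodule ℝ (↥W × Module.Dual ℝ ↥W),
      (↑LW = {q : ↥W × Module.Dual ℝ ↥W |
        ∃ (X : V) (α : Module.Dual ℝ V), (X, α) ∈ L ∧ X = (q.1 : V) ∧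
          ∀ w : W, α w = q.2 w}) ∧
      finrank ℝ LW = finrank ℝ W := by
  refine ⟨pullback W L, coe_pullback W L, ?_⟩
  have hcount := finrank_pullback_add W L
  rw [finrank_inf_prod_top hL hdim W] at hcount
  omega

end
end
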